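/- For every integer k≥1, the interpolating polynomial p_k of σ_k has degree 2k, its coefficient of X^{2k} equals 1/(2^k k!), and its coefficient of X^{2k−1} equals −(2k+1)/(3·2^k (k−1)!); the interpolating polynomial r_k of Q_k has coefficient of X^{2k} equal to (−1)^k/(2^k k!) and coefficient of X^{2k−1} equal to (−1)^k (2k−5)/(3·2^k (k−1)!). -/

import Mathlib

/-!
Both families satisfy a first-order difference equation in `j`:
`σ_{k+1}(j+1) = σ_{k+1}(j) + j σ_k(j)`, and, since `Σ_k Q_k(j) t^k` is the inverse of
`Σ_i σ_i(j) t^i = ∏_{n<j} (1 + n t)`, `Q_{k+1}(j+1) = Q_{k+1}(j) - j Q_k(j+1)`. So the interpolant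
at level `k+1` is the antidifference, vanishing at `1`, of `c X f(X + s)`, where `f` interpolates
level `k`; antidifferences exist because `X^i` is the difference of `B_{i+1} / (i+1)` (Bernoulli
polynomials). Comparing the two top coefficients of `F(X+1) - F(X)` with those of `c X f(X + s)`
gives a linear recursion for the two top coefficients of the interpolants, whose solution is the
closed form. Interpolants are unique, being determined at infinitely many points.
-/

/-- `σ_i(j) = Σ_{1 ≤ n_1 < ⋯ < n_i ≤ j-1} n_1 ⋯ n_i`, with `σ_0(j) = 1`. -/
def sigmaP (i j : ℕ) : ℚ :=
  ∑ t ∈ (Finset.Icc 1 (j - 1)).powersetCard i, ∏ m ∈ t, (m : ℚ)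

/-- `Q_0(j) = 1` and `Q_k(j) = -Σ_{i=1}^{k} σ_i(j) Q_{k-i}(j)` for `k ≥ 1`. -/
def QP (j : ℕ) : ℕ → ℚ
  | 0 => 1
  | k + 1 => -∑ i : Fin (k + 1), sigmaP (i + 1) j * QP j (k - i)
  termination_by k => k
  decreasing_by omega

namespace Polynomial

theorem coeff_taylor_of_natDegree_le_add_two {R : Type*} [CommSemiring R] (r : R) {f : R[X]}
    {n : ℕ} (hf : f.natDegree ≤ n + 2) :
    (taylor r f).coeff n =
      f.coeff n + (n + 1) * r * f.coeff (n + 1) + (n + 2).choose 2 * r ^ 2 * f.coeff (n + 2) := by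
  have hdeg : (hasseDeriv n f).natDegree < 3 := by
    have := natDegree_hasseDeriv_le f n
    omega
  rw [taylor_coeff, eval_eq_sum_range' hdeg]
  simp only [Finset.sum_range_succ, Finset.sum_range_zero, hasseDeriv_coeff]
  have h1 : (1 + n).choose n = n + 1 := by rw [add_comm]; exact Nat.choose_succ_self_right n
  have h2 : (2 + n).choose n = (n + 2).choose 2 := by rw [add_comm, Nat.choose_symm_add]
  simp only [zero_add, Nat.choose_self, h1, h2]
  rw [add_comm 1 n, add_comm 2 n]
  push_cast
  ring

theorem coeff_X_mul_taylor {R : Type*} [CommSemiring R] (r : R) {f : R[X]} {n : ℕ}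
    (hf : f.natDegree ≤ n) : (X * taylor r f).coeff n = (X * f).coeff n + n * r * f.coeff n := by
  cases n with
  | zero => simp
  | succ m =>
    rw [coeff_X_mul, coeff_X_mul, coeff_taylor_of_natDegree_le_add_two r (by omega),
      coeff_eq_zero_of_natDegree_lt (by omega : f.natDegree < m + 2)]
    push_cast
    ring

theorem coeff_eq_of_taylor_one_eq_add {R : Type*} [CommRing R] {F G : R[X]}
    (h : taylor 1 F = F + G) {n : ℕ} (hF : F.natDegree ≤ n + 2) :
    G.coeff n = (n + 1) * F.coeff (n + 1) + (n + 2).choose 2 * F.coeff (n + 2) := by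
  have := congrArg (coeff · n) h
  simp only [coeff_add, coeff_taylor_of_natDegree_le_add_two 1 hF] at this
  linear_combination -this

theorem natDegree_bernoulli_le (n : ℕ) : (bernoulli n).natDegree ≤ n :=
  natDegree_le_iff_coeff_eq_zero.2 fun i hi => by simp [coeff_bernoulli, not_le.2 hi]

theorem exists_taylor_one_eq_add {G : ℚ[X]} {n : ℕ} (hG : G.natDegree ≤ n) :
    ∃ F : ℚ[X], F.natDegree ≤ n + 1 ∧ taylor 1 F = F + G := by
  let Δ : ℚ[X] →ₗ[ℚ] ℚ[X] := taylor 1 - LinearMap.id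
  suffices degreeLE ℚ n ≤ (degreeLE ℚ ↑(n + 1)).map Δ by
    obtain ⟨F, hF, hΔ⟩ := this (mem_degreeLE.2 (natDegree_le_iff_degree_le.1 hG))
    refine ⟨F, natDegree_le_iff_degree_le.2 (mem_degreeLE.1 hF), ?_⟩
    rw [← hΔ]
    simp [Δ]
  rw [degreeLE_eq_span_X_pow, Submodule.span_le, Finset.coe_image, Set.image_subset_iff]
  intro i hi
  refine ⟨((i : ℚ) + 1)⁻¹ • bernoulli (i + 1), ?_, ?_⟩
  · rw [SetLike.mem_coe, mem_degreeLE, ← natDegree_le_iff_degree_le]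
    refine (natDegree_smul_le _ _).trans ((natDegree_bernoulli_le _).trans ?_)
    rw [Finset.mem_coe, Finset.mem_range] at hi
    omega
  · have h := bernoulli_comp_one_add_X (i + 1)
    rw [add_comm (1 : ℚ[X])] at h
    simp only [Δ, LinearMap.sub_apply, LinearMap.map_smul, LinearMap.id_apply, taylor_apply, C_1, h]
    rw [smul_add, add_sub_cancel_left, add_tsub_cancel_right, ← Nat.cast_smul_eq_nsmul ℚ, smul_smul]
    push_cast
    rw [inv_mul_cancel₀ (by positivity), one_smul]

theorem eq_of_eval_natCast_eq {R : Type*} [CommRing R] [IsDomain R] [CharZero R] {p q : R[X]}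
    (h : ∀ j : ℕ, 1 ≤ j → p.eval (j : R) = q.eval (j : R)) : p = q := by
  refine eq_of_infinite_eval_eq p q (Set.infinite_of_injective_forall_mem
    (f := fun n : ℕ => ((n + 1 : ℕ) : R)) (fun a b hab => by simpa using hab) fun n => ?_)
  exact h (n + 1) (by omega)

end Polynomial

section

open Polynomial

theorem exists_antidiff_C_mul_X_mul_taylor (c s : ℚ) {f : ℚ[X]} {k : ℕ}
    (hf : f.natDegree ≤ 2 * k) :
    ∃ F : ℚ[X], F.natDegree ≤ 2 * k + 2 ∧ F.eval 1 = 0 ∧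
      (∀ x, F.eval (x + 1) = F.eval x + c * x * f.eval (x + s)) ∧
      F.coeff (2 * k + 2) = c * f.coeff (2 * k) / (2 * k + 2) ∧
      (X * F).coeff (2 * k + 2) =
        c * ((X * f).coeff (2 * k) + 2 * k * s * f.coeff (2 * k)) / (2 * k + 1) -
          c * f.coeff (2 * k) / 2 := by
  set G : ℚ[X] := C c * (X * taylor s f) with hG
  have hGdeg : G.natDegree ≤ 2 * k + 1 := by
    refine (natDegree_C_mul_le _ _).trans (natDegree_mul_le.trans ?_)
    rw [natDegree_X, natDegree_taylor]
    omega
  have hGtop : G.coeff (2 * k + 1) = c * f.coeff (2 * k) := by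
    rw [hG, coeff_C_mul, coeff_X_mul_taylor s (hf.trans (by omega)), coeff_X_mul,
      coeff_eq_zero_of_natDegree_lt (by omega : f.natDegree < 2 * k + 1)]
    ring
  have hGsub : G.coeff (2 * k) = c * ((X * f).coeff (2 * k) + 2 * k * s * f.coeff (2 * k)) := by
    rw [hG, coeff_C_mul, coeff_X_mul_taylor s hf]
    push_cast
    ring
  obtain ⟨F₀, hF₀deg, hF₀⟩ := exists_taylor_one_eq_add hGdeg
  set F := F₀ - C (F₀.eval 1)
  have hF : taylor 1 F = F + G := by
    simp only [F, map_sub, taylor_C, hF₀]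
    ring
  have hFdeg : F.natDegree ≤ 2 * k + 2 := natDegree_sub_C.le.trans hF₀deg
  have htop := coeff_eq_of_taylor_one_eq_add hF (n := 2 * k + 1) (by omega)
  have hsub := coeff_eq_of_taylor_one_eq_add hF (n := 2 * k) (by omega)
  rw [hGtop, coeff_eq_zero_of_natDegree_lt (by omega : F.natDegree < 2 * k + 1 + 2), mul_zero,
    add_zero, show 2 * k + 1 + 1 = 2 * k + 2 by ring] at htop
  rw [hGsub] at hsub
  push_cast [Nat.cast_choose_two] at htop hsub
  refine ⟨F, hFdeg, by simp [F], fun x => ?_, ?_, ?_⟩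
  · simpa [taylor_eval, G, mul_assoc] using congrArg (eval x) hF
  · rw [eq_div_iff (by positivity)]
    linear_combination -htop
  · rw [coeff_X_mul, eq_sub_iff_add_eq, eq_div_iff (by positivity)]
    linear_combination -hsub + (2 * k + 1) / 2 * htop

-- `(X * f).coeff (2 * k)` is `f.coeff (2 * k - 1)`, except that at `k = 0` it is `0` rather than
-- the junk value `f.coeff 0`.
theorem exists_interpolant_of_recurrence (a : ℕ → ℕ → ℚ) (c : ℚ) (s : ℕ)
    (h_zero : ∀ j, 1 ≤ j → a 0 j = 1) (h_one : ∀ k, a (k + 1) 1 = 0)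
    (h_succ : ∀ k j, 1 ≤ j → a (k + 1) (j + 1) = a (k + 1) j + c * j * a k (j + s)) (k : ℕ) :
    ∃ f : ℚ[X], f.natDegree ≤ 2 * k ∧ (∀ j : ℕ, 1 ≤ j → f.eval (j : ℚ) = a k j) ∧
      f.coeff (2 * k) = c ^ k / (2 ^ k * k.factorial) ∧
      (X * f).coeff (2 * k) =
        c ^ k * k * ((2 * k + 1) * (2 * s - 1) - 6 * s) / (3 * 2 ^ k * k.factorial) := by
  induction k with
  | zero => exact ⟨1, by simp, fun j hj => by simp [h_zero j hj], by simp, by simp⟩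
  | succ k ih =>
    obtain ⟨f, hfdeg, hfval, hftop, hfsub⟩ := ih
    obtain ⟨F, hFdeg, hF1, hFstep, hFtop, hFsub⟩ := exists_antidiff_C_mul_X_mul_taylor c s hfdeg
    refine ⟨F, by omega, fun j hj => ?_, ?_, ?_⟩
    · induction j, hj using Nat.le_induction with
      | base => simpa [h_one] using hF1
      | succ j hj ih =>
        have := hfval (j + s) (by omega)
        push_cast at this ⊢
        rw [hFstep, ih, h_succ k j hj, this]
    · rw [show 2 * (k + 1) = 2 * k + 2 by ring, hFtop, hftop, Nat.factorial_succ]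
      push_cast
      field_simp
      ring
    · rw [show 2 * (k + 1) = 2 * k + 2 by ring, hFsub, hftop, hfsub, Nat.factorial_succ]
      push_cast
      field_simp
      ring

end

theorem Multiset.esymm_cons_succ {R : Type*} [CommSemiring R] (a : R) (s : Multiset R) (n : ℕ) :
    (a ::ₘ s).esymm (n + 1) = s.esymm (n + 1) + a * s.esymm n := by
  simp [Multiset.esymm, Multiset.powersetCard_cons, Multiset.sum_map_mul_left]

lemma sigmaP_zero (j : ℕ) : sigmaP 0 j = 1 := by simp [sigmaP]

lemma sigmaP_succ_one (i : ℕ) : sigmaP (i + 1) 1 = 0 := by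
  rw [sigmaP, Finset.powersetCard_eq_empty.2 (by simp), Finset.sum_empty]

lemma sigmaP_eq_esymm (i j : ℕ) :
    sigmaP i j = ((Finset.Icc 1 (j - 1)).val.map (Nat.cast : ℕ → ℚ)).esymm i :=
  (Finset.esymm_map_val _ _ _).symm

lemma sigmaP_succ_succ (i j : ℕ) :
    sigmaP (i + 1) (j + 1) = sigmaP (i + 1) j + j * sigmaP i j := by
  rcases j with _ | j
  · simp [sigmaP]
  · simp only [sigmaP_eq_esymm, Nat.add_sub_cancel]
    rw [← Finset.insert_Icc_right_eq_Icc_add_one (by omega), Finset.insert_val_of_notMem (by simp),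
      Multiset.map_cons, Multiset.esymm_cons_succ]

lemma QP_zero (j : ℕ) : QP j 0 = 1 := by rw [QP]

lemma QP_succ_eq_neg_sum (j k : ℕ) :
    QP j (k + 1) = -∑ i ∈ Finset.range (k + 1), sigmaP (i + 1) j * QP j (k - i) := by
  rw [QP, Fin.sum_univ_eq_sum_range (fun i => sigmaP (i + 1) j * QP j (k - i))]

lemma QP_succ_one (k : ℕ) : QP 1 (k + 1) = 0 := by
  simp [QP_succ_eq_neg_sum, sigmaP_succ_one]

section

open PowerSeries

lemma mk_sigmaP_mul_mk_QP (j : ℕ) : mk (fun i => sigmaP i j) * mk (QP j) = 1 := by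
  ext n
  rw [coeff_mul, coeff_one]
  rcases n with _ | n
  · simp [sigmaP_zero, QP_zero]
  · rw [Finset.Nat.sum_antidiagonal_succ, Finset.Nat.sum_antidiagonal_eq_sum_range_succ_mk]
    simp [sigmaP_zero, QP_succ_eq_neg_sum]

lemma mk_sigmaP_succ (j : ℕ) :
    mk (fun i => sigmaP i (j + 1)) = (1 + C (j : ℚ) * X) * mk (fun i => sigmaP i j) := by
  ext n
  rcases n with _ | n
  · simp [sigmaP_zero]
  · simp only [add_mul, one_mul, mul_assoc, map_add, coeff_C_mul, coeff_succ_X_mul, coeff_mk,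
      sigmaP_succ_succ]

lemma QP_succ (j k : ℕ) : QP j (k + 1) = QP (j + 1) (k + 1) + j * QP (j + 1) k := by
  have h : mk (QP j) = (1 + C (j : ℚ) * X) * mk (QP (j + 1)) := by
    refine mul_left_cancel₀ (a := mk (fun i => sigmaP i j)) ?_ ?_
    · exact fun h => by simpa [sigmaP_zero] using congrArg constantCoeff h
    · rw [mk_sigmaP_mul_mk_QP, ← mul_assoc, mul_comm _ (1 + _), ← mk_sigmaP_succ,
        mk_sigmaP_mul_mk_QP]
  simpa only [add_mul, one_mul, mul_assoc, map_add, coeff_C_mul, coeff_succ_X_mul, coeff_mk] using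
    congrArg (coeff (k + 1)) h

end

theorem stmt10_general (k : ℕ) (hk : 1 ≤ k) (p r : Polynomial ℚ)
    (hpval : ∀ j : ℕ, 1 ≤ j → p.eval (j : ℚ) = sigmaP k j)
    (hrval : ∀ j : ℕ, 1 ≤ j → r.eval (j : ℚ) = QP j k) :
    p.natDegree = 2 * k ∧
    p.coeff (2 * k) = 1 / (2 ^ k * (k.factorial : ℚ)) ∧
    p.coeff (2 * k - 1) = -(2 * (k : ℚ) + 1) / (3 * 2 ^ k * ((k - 1).factorial : ℚ)) ∧
    r.coeff (2 * k) = (-1) ^ k / (2 ^ k * (k.factorial : ℚ)) ∧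
    r.coeff (2 * k - 1) =
      (-1) ^ k * (2 * (k : ℚ) - 5) / (3 * 2 ^ k * ((k - 1).factorial : ℚ)) := by
  obtain ⟨f, hfdeg, hfval, hftop, hfsub⟩ := exists_interpolant_of_recurrence sigmaP
    1 0 (fun j _ => sigmaP_zero j) sigmaP_succ_one (fun k j _ => by simp [sigmaP_succ_succ]) k
  obtain ⟨g, -, hgval, hgtop, hgsub⟩ := exists_interpolant_of_recurrence (fun k j => QP j k)
    (-1) 1 (fun j _ => QP_zero j) QP_succ_one (fun k j _ => by simp [QP_succ j k]) k
  obtain rfl : p = f :=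
    Polynomial.eq_of_eval_natCast_eq fun j hj => (hpval j hj).trans (hfval j hj).symm
  obtain rfl : r = g :=
    Polynomial.eq_of_eval_natCast_eq fun j hj => (hrval j hj).trans (hgval j hj).symm
  rw [one_pow] at hftop
  obtain ⟨m, rfl⟩ := Nat.exists_eq_add_of_le' hk
  rw [show 2 * (m + 1) = 2 * m + 1 + 1 by ring, Polynomial.coeff_X_mul] at hfsub hgsub
  refine ⟨Polynomial.natDegree_eq_of_le_of_coeff_ne_zero hfdeg (by rw [hftop]; positivity), hftop,
    ?_, hgtop, ?_⟩
  · rw [show 2 * (m + 1) - 1 = 2 * m + 1 by omega, hfsub, Nat.add_sub_cancel, Nat.factorial_succ]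
    push_cast
    field_simp
    ring
  · rw [show 2 * (m + 1) - 1 = 2 * m + 1 by omega, hgsub, Nat.add_sub_cancel, Nat.factorial_succ]
    push_cast
    field_simp
    ring

theorem stmt10 (k : ℕ) (hk : 1 ≤ k) (p r : Polynomial ℚ)
    (hpdeg : p.natDegree ≤ 2 * k)
    (hpval : ∀ j : ℕ, 1 ≤ j → p.eval (j : ℚ) = sigmaP k j)
    (hrdeg : r.natDegree ≤ 2 * k)
    (hrval : ∀ j : ℕ, 1 ≤ j → r.eval (j : ℚ) = QP j k) :
    p.natDegree = 2 * k ∧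
    p.coeff (2 * k) = 1 / (2 ^ k * (k.factorial : ℚ)) ∧
    p.coeff (2 * k - 1) = -(2 * (k : ℚ) + 1) / (3 * 2 ^ k * ((k - 1).factorial : ℚ)) ∧
    r.coeff (2 * k) = (-1) ^ k / (2 ^ k * (k.factorial : ℚ)) ∧
    r.coeff (2 * k - 1) =
      (-1) ^ k * (2 * (k : ℚ) - 5) / (3 * 2 ^ k * ((k - 1).factorial : ℚ)) :=
  stmt10_general k hk p r hpval hrval
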